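/- arXiv:1612.01394 — 2 statements merged into one kernel-verified Lean document; each statement's English description precedes it below -/
import Mathlib

section
/- The number of squarefree integers up to x satisfies ∑_{k ≤ x} |μ(k)| = (6/π²)·x + O(√x); precisely, there exists a constant A > 0 such that for all real x ≥ 1, |∑_{1 ≤ k ≤ x} μ(k)² - (6/π²)·x| ≤ A·√x. -/
open Nat ArithmeticFunction Finset Real
open scoped ArithmeticFunction.Moebius LSeries.notation

/-!
Writing `k = b² a` with `a` squarefree, the `d` with `d² ∣ k` are exactly the divisors of `b`,
so `μ(k)² = ∑_{d² ∣ k} μ(d)`. Swapping the sums gives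
`∑_{k ≤ N} μ(k)² = ∑_{d ≤ √N} μ(d) ⌊N / d²⌋`. Replacing `⌊N / d²⌋` by `N / d²` costs at most `√N`,
and completing `∑_{d ≤ √N} μ(d) / d²` to `1 / ζ(2) = 6 / π²` costs `N ∑_{d > √N} d⁻² = O(√N)`.
-/

theorem Nat.sq_dvd_sq_mul_iff_dvd {a b d : ℕ} (ha : Squarefree a) :
    d ^ 2 ∣ b ^ 2 * a ↔ d ∣ b := by
  rcases eq_or_ne b 0 with rfl | hb
  · simp
  refine ⟨fun h => ?_, fun h => (pow_dvd_pow_of_dvd h 2).mul_right a⟩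
  have hba : b ^ 2 * a ≠ 0 := mul_ne_zero (pow_ne_zero 2 hb) ha.ne_zero
  have hd : d ≠ 0 := by rintro rfl; simp [hba] at h
  rw [← Nat.factorization_le_iff_dvd (pow_ne_zero 2 hd) hba] at h
  rw [← Nat.factorization_le_iff_dvd hd hb]
  intro p
  have hp := h p
  have hap := ha.natFactorization_le_one p
  simp only [Nat.factorization_mul (pow_ne_zero 2 hb) ha.ne_zero, Nat.factorization_pow,
    Finsupp.add_apply, Finsupp.smul_apply, smul_eq_mul] at hp
  omega

theorem tsum_inv_sq_nat_add_le {D : ℕ} (hD : D ≠ 0) :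
    ∑' i : ℕ, (((i + (D + 1) : ℕ) : ℝ) ^ 2)⁻¹ ≤ (D : ℝ)⁻¹ := by
  refine Real.tsum_le_of_sum_range_le (fun _ => by positivity) fun n => ?_
  calc ∑ i ∈ range n, (((i + (D + 1) : ℕ) : ℝ) ^ 2)⁻¹
      = ∑ j ∈ Ioc D (D + n), ((j : ℝ) ^ 2)⁻¹ := by
        rw [range_eq_Ico, sum_Ico_add' (fun j : ℕ => ((j : ℝ) ^ 2)⁻¹), zero_add,
          ← Ico_add_one_add_one_eq_Ioc, add_comm n, add_right_comm]
    _ ≤ (D : ℝ)⁻¹ - ((D + n : ℕ) : ℝ)⁻¹ := sum_Ioc_inv_sq_le_sub hD (by omega)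
    _ ≤ (D : ℝ)⁻¹ := sub_le_self _ (by positivity)

theorem abs_sub_sum_range_le_of_hasSum {f : ℕ → ℝ} {a : ℝ} (hf : HasSum f a) {D : ℕ}
    (hD : D ≠ 0) (hbound : ∀ n, D < n → |f n| ≤ ((n : ℝ) ^ 2)⁻¹) :
    |a - ∑ n ∈ range (D + 1), f n| ≤ (D : ℝ)⁻¹ := by
  have htail := (summable_nat_add_iff (D + 1)).mpr hf.summable
  have hsq := (summable_nat_add_iff (D + 1)).mpr (summable_nat_pow_inv.mpr one_lt_two)
  rw [← hf.tsum_eq, ← hf.summable.sum_add_tsum_nat_add (D + 1), add_sub_cancel_left]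
  calc |∑' i, f (i + (D + 1))| ≤ ∑' i, |f (i + (D + 1))| := by
        simpa only [Real.norm_eq_abs] using norm_tsum_le_tsum_norm htail.norm
    _ ≤ ∑' i : ℕ, (((i + (D + 1) : ℕ) : ℝ) ^ 2)⁻¹ :=
        htail.abs.tsum_le_tsum (fun i => hbound _ (by omega)) hsq
    _ ≤ (D : ℝ)⁻¹ := tsum_inv_sq_nat_add_le hD

theorem abs_natCast_div_sub_natCast_div_le_one {K : Type*} [Field K] [LinearOrder K]
    [IsStrictOrderedRing K] [FloorSemiring K] (m n : ℕ) :
    |(m : K) / n - (m / n : ℕ)| ≤ 1 := by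
  rw [← Nat.floor_div_eq_div (K := K), abs_le]
  have hfloor := Nat.floor_le (by positivity : (0 : K) ≤ m / n)
  have hlt := Nat.lt_floor_add_one ((m : K) / n)
  constructor <;> linarith

namespace ArithmeticFunction

theorem sum_moebius_of_sq_dvd {k : ℕ} (hk : k ≠ 0) :
    ∑ d ∈ k.divisors with d ^ 2 ∣ k, μ d = μ k ^ 2 := by
  obtain ⟨a, b, rfl, ha⟩ := Nat.sq_mul_squarefree k
  have hb : b ≠ 0 := by rintro rfl; simp at hk
  have hdiv : {d ∈ (b ^ 2 * a).divisors | d ^ 2 ∣ b ^ 2 * a} = b.divisors := by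
    ext d
    simp only [mem_filter, Nat.mem_divisors, Nat.sq_dvd_sq_mul_iff_dvd ha]
    exact ⟨fun h => ⟨h.2, hb⟩, fun h => ⟨⟨h.1.trans (Dvd.intro (b * a) (by ring)), hk⟩, h.1⟩⟩
  have hsq : Squarefree (b ^ 2 * a) ↔ b = 1 := by
    refine ⟨fun h => Nat.isUnit_iff.mp (h b ⟨a, by ring⟩), ?_⟩
    rintro rfl
    simpa using ha
  rw [hdiv, moebius_sq, ← coe_mul_zeta_apply, moebius_mul_coe_zeta, one_apply]
  exact (if_congr hsq rfl rfl).symm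

theorem sum_Icc_moebius_sq (N : ℕ) :
    ∑ k ∈ Icc 1 N, μ k ^ 2 = ∑ d ∈ Icc 1 (Nat.sqrt N), μ d * (N / d ^ 2 : ℕ) := by
  have hswap : ∀ k d, k ∈ Icc 1 N ∧ d ∈ {d ∈ k.divisors | d ^ 2 ∣ k} ↔
      k ∈ {k ∈ Icc 1 N | d ^ 2 ∣ k} ∧ d ∈ Icc 1 (Nat.sqrt N) := by
    intro k d
    simp only [mem_filter, mem_Icc, Nat.mem_divisors]
    constructor
    · rintro ⟨⟨hk1, hkN⟩, ⟨hdk, -⟩, hd2k⟩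
      have hd : 0 < d := Nat.pos_of_dvd_of_pos hdk hk1
      exact ⟨⟨⟨hk1, hkN⟩, hd2k⟩, hd, Nat.le_sqrt'.mpr ((Nat.le_of_dvd hk1 hd2k).trans hkN)⟩
    · rintro ⟨⟨⟨hk1, hkN⟩, hd2k⟩, -⟩
      exact ⟨⟨hk1, hkN⟩, ⟨(Dvd.intro d (sq d).symm).trans hd2k, by omega⟩, hd2k⟩
  calc ∑ k ∈ Icc 1 N, μ k ^ 2
      = ∑ k ∈ Icc 1 N, ∑ d ∈ k.divisors with d ^ 2 ∣ k, μ d :=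
        sum_congr rfl fun k hk => (sum_moebius_of_sq_dvd (by simp at hk; omega)).symm
    _ = ∑ d ∈ Icc 1 (Nat.sqrt N), ∑ k ∈ Icc 1 N with d ^ 2 ∣ k, μ d := sum_comm' hswap
    _ = ∑ d ∈ Icc 1 (Nat.sqrt N), μ d * (N / d ^ 2 : ℕ) := by
        refine sum_congr rfl fun d _ => ?_
        rw [sum_const, show Icc 1 N = Ioc 0 N from Icc_add_one_left_eq_Ioc 0 N,
          Nat.Ioc_filter_dvd_card_eq_div, nsmul_eq_mul, mul_comm]

theorem hasSum_moebius_div_sq :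
    HasSum (fun d : ℕ => (μ d : ℝ) / d ^ 2) (6 / π ^ 2) := by
  have hs : 1 < (2 : ℂ).re := by norm_num
  have hL : L ↗μ 2 = 6 / (π : ℂ) ^ 2 := by
    have h := LSeries_zeta_mul_Lseries_moebius hs
    rw [LSeries_zeta_eq_riemannZeta hs, riemannZeta_two] at h
    have hπ : (π : ℂ) ≠ 0 := Complex.ofReal_ne_zero.mpr pi_ne_zero
    field_simp at h ⊢
    linear_combination h
  have h := (LSeriesSummable_moebius_iff.mpr hs).LSeriesHasSum
  rw [LSeriesHasSum, hL] at h
  refine Complex.hasSum_ofReal.mp ?_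
  convert h using 1
  · funext n
    rcases eq_or_ne n 0 with rfl | hn
    · simp
    · simp [LSeries.term_of_ne_zero hn]
  · push_cast; rfl

theorem abs_moebius_cast_le_one {R : Type*} [Ring R] [LinearOrder R] [IsStrictOrderedRing R]
    (n : ℕ) : |(μ n : R)| ≤ 1 := by
  exact_mod_cast abs_moebius_le_one

theorem abs_sum_moebius_div_sq_sub_le {D : ℕ} (hD : D ≠ 0) :
    |∑ d ∈ Icc 1 D, (μ d : ℝ) / d ^ 2 - 6 / π ^ 2| ≤ (D : ℝ)⁻¹ := by
  have hrange : ∑ d ∈ range (D + 1), (μ d : ℝ) / d ^ 2 = ∑ d ∈ Icc 1 D, (μ d : ℝ) / d ^ 2 := by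
    rw [range_eq_Ico, sum_eq_sum_Ico_succ_bot (by omega : 0 < D + 1), zero_add,
      Ico_add_one_right_eq_Icc]
    simp
  rw [abs_sub_comm, ← hrange]
  refine abs_sub_sum_range_le_of_hasSum hasSum_moebius_div_sq hD fun n _ => ?_
  rw [abs_div, abs_of_nonneg (by positivity : (0 : ℝ) ≤ (n : ℝ) ^ 2), div_eq_mul_inv]
  exact mul_le_of_le_one_left (by positivity) (abs_moebius_cast_le_one n)

theorem abs_sum_moebius_mul_div_sub_div_le (N D : ℕ) :
    |∑ d ∈ Icc 1 D, (μ d : ℝ) * ((N : ℝ) / (d ^ 2 : ℕ) - (N / d ^ 2 : ℕ))| ≤ D := by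
  calc |∑ d ∈ Icc 1 D, (μ d : ℝ) * ((N : ℝ) / (d ^ 2 : ℕ) - (N / d ^ 2 : ℕ))|
      ≤ ∑ d ∈ Icc 1 D, |(μ d : ℝ) * ((N : ℝ) / (d ^ 2 : ℕ) - (N / d ^ 2 : ℕ))| :=
        abs_sum_le_sum_abs _ _
    _ ≤ ∑ d ∈ Icc 1 D, (1 : ℝ) := sum_le_sum fun d _ => by
        rw [abs_mul]
        exact mul_le_one₀ (abs_moebius_cast_le_one d) (abs_nonneg _)
          (abs_natCast_div_sub_natCast_div_le_one _ _)
    _ = D := by simp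

theorem abs_sum_Icc_moebius_sq_sub_le {N : ℕ} (hN : N ≠ 0) :
    |∑ k ∈ Icc 1 N, (μ k : ℝ) ^ 2 - 6 / π ^ 2 * N| ≤ 4 * √N := by
  set D := Nat.sqrt N
  have hD : D ≠ 0 := (Nat.sqrt_pos.mpr (Nat.pos_of_ne_zero hN)).ne'
  have hDN : (D : ℝ) ≤ √N := Real.nat_sqrt_le_real_sqrt
  have hN1 : 1 ≤ √N := Real.one_le_sqrt.mpr (by exact_mod_cast Nat.one_le_iff_ne_zero.mpr hN)
  set P := ∑ d ∈ Icc 1 D, (μ d : ℝ) / d ^ 2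
  set E := ∑ d ∈ Icc 1 D, (μ d : ℝ) * ((N : ℝ) / (d ^ 2 : ℕ) - (N / d ^ 2 : ℕ))
  have hdecomp : ∑ k ∈ Icc 1 N, (μ k : ℝ) ^ 2 - 6 / π ^ 2 * N = N * (P - 6 / π ^ 2) - E := by
    have hcount : ∑ k ∈ Icc 1 N, (μ k : ℝ) ^ 2 = ∑ d ∈ Icc 1 D, (μ d : ℝ) * (N / d ^ 2 : ℕ) := by
      have h := congrArg (Int.cast : ℤ → ℝ) (sum_Icc_moebius_sq N)
      push_cast at h
      exact h
    have hterm : ∀ d : ℕ, (N : ℝ) * ((μ d : ℝ) / d ^ 2) = μ d * ((N : ℝ) / (d ^ 2 : ℕ)) := by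
      intro d
      push_cast
      ring
    rw [hcount, mul_sub, mul_sum, sum_congr rfl fun d _ => hterm d]
    simp only [E, mul_sub, sum_sub_distrib]
    ring
  have hmain : |(N : ℝ) * (P - 6 / π ^ 2)| ≤ (D : ℝ) + 2 := by
    have hND : (N : ℝ) ≤ D * D + D + D := by exact_mod_cast Nat.sqrt_le_add N
    have hDpos : (0 : ℝ) < D := by exact_mod_cast Nat.pos_of_ne_zero hD
    calc |(N : ℝ) * (P - 6 / π ^ 2)| ≤ N * (D : ℝ)⁻¹ := by
          rw [abs_mul, Nat.abs_cast]
          exact mul_le_mul_of_nonneg_left (abs_sum_moebius_div_sq_sub_le hD) N.cast_nonneg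
      _ ≤ D + 2 := by
          rw [mul_inv_le_iff₀ hDpos]
          linarith
  calc |∑ k ∈ Icc 1 N, (μ k : ℝ) ^ 2 - 6 / π ^ 2 * N| ≤ |(N : ℝ) * (P - 6 / π ^ 2)| + |E| := by
        rw [hdecomp]; exact abs_sub _ _
    _ ≤ 4 * √N := by linarith [abs_sum_moebius_mul_div_sub_div_le N D]

end ArithmeticFunction

theorem squarefree_count_asymptotic :
    ∃ A : ℝ, 0 < A ∧ ∀ x : ℝ, 1 ≤ x →
      |(∑ k ∈ Finset.Icc 1 ⌊x⌋₊,
          ((ArithmeticFunction.moebius k : ℝ)) ^ 2) - (6 / Real.pi ^ 2) * x| ≤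
        A * Real.sqrt x := by
  refine ⟨5, by norm_num, fun x hx => ?_⟩
  set N := ⌊x⌋₊
  have hN : N ≠ 0 := (Nat.floor_pos.mpr hx).ne'
  have hNx : (N : ℝ) ≤ x := Nat.floor_le (by linarith)
  have hxN : x < N + 1 := Nat.lt_floor_add_one x
  have hc : |6 / π ^ 2| ≤ 1 := by
    rw [abs_of_pos (by positivity), div_le_one (by positivity)]
    nlinarith [pi_gt_three]
  have hfloor : |x - N| ≤ 1 := abs_le.mpr ⟨by linarith, by linarith⟩
  calc |∑ k ∈ Icc 1 N, (μ k : ℝ) ^ 2 - 6 / π ^ 2 * x|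
      = |(∑ k ∈ Icc 1 N, (μ k : ℝ) ^ 2 - 6 / π ^ 2 * N) - 6 / π ^ 2 * (x - N)| := by ring_nf
    _ ≤ 4 * √N + 1 := by
        refine (abs_sub _ _).trans (add_le_add (abs_sum_Icc_moebius_sq_sub_le hN) ?_)
        rw [abs_mul]
        exact mul_le_one₀ hc (abs_nonneg _) hfloor
    _ ≤ 5 * √x := by
        have := Real.sqrt_le_sqrt hNx
        have := Real.one_le_sqrt.mpr hx
        linarith
end

section
/- For every positive integer n, the determinant of the n×n Redheffer matrix equals M(n), the Mertens function at n. -/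
/-!
For an arithmetic function `f` let `D_f` be the upper triangular matrix with entries `f (j / i)`
for `i ∣ j`. Matrix multiplication of such matrices is Dirichlet convolution, so `D_μ D_ζ = 1`,
and `det D_μ = μ(1)^n = 1`. The Redheffer matrix `R` is `D_ζ` with its first column replaced by
the all-ones vector, so `D_μ R` is the identity with first column `D_μ 1`, whose top entry is
`∑_{k ≤ n} μ(k) = M(n)`.
-/

open Nat ArithmeticFunction Finset Matrix

/-- The `n × n` Redheffer matrix: entry `(i, j)` (with `i, j` running over `1, …, n`,
represented by `Fin n` shifted by one) is `1` if `j = 1` or `i ∣ j`, and `0` otherwise. -/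
def redheffer (n : ℕ) : Matrix (Fin n) (Fin n) ℤ :=
  fun i j => if j.val + 1 = 1 ∨ (i.val + 1) ∣ (j.val + 1) then 1 else 0

open scoped ArithmeticFunction.zeta ArithmeticFunction.Moebius

theorem Fin.sum_univ_eq_sum_Icc_one {M : Type*} [AddCommMonoid M] (n : ℕ) (F : ℕ → M) :
    ∑ k : Fin n, F (k.val + 1) = ∑ m ∈ Icc 1 n, F m := by
  rw [Fin.sum_univ_eq_sum_range (fun k => F (k + 1)), range_eq_Ico, sum_Ico_add', zero_add,
    Ico_add_one_right_eq_Icc]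

theorem Matrix.det_one_updateCol {ι R : Type*} [Fintype ι] [DecidableEq ι] [CommRing R]
    (i : ι) (v : ι → R) : ((1 : Matrix ι ι R).updateCol i v).det = v i := by
  rw [← cramer_apply, cramer_one]
  rfl

theorem Nat.sum_Icc_filter_dvd_dvd {M : Type*} [AddCommMonoid M] {a b n : ℕ} (hab : a ∣ b)
    (hb : b ≠ 0) (hbn : b ≤ n) (F : ℕ → M) :
    ∑ m ∈ Icc 1 n with a ∣ m ∧ m ∣ b, F m = ∑ d ∈ (b / a).divisors, F (a * d) := by
  have ha : 0 < a := Nat.pos_of_dvd_of_pos hab (Nat.pos_of_ne_zero hb)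
  have hinj : Set.InjOn (a * ·) (b / a).divisors := fun x _ y _ h =>
    Nat.eq_of_mul_eq_mul_left ha h
  rw [← sum_image hinj (f := F)]
  congr 1
  ext m
  simp only [mem_filter, mem_Icc, mem_image, Nat.mem_divisors, Nat.dvd_div_iff_mul_dvd hab]
  constructor
  · rintro ⟨-, ⟨d, rfl⟩, hdb⟩
    exact ⟨d, ⟨hdb, (Nat.div_pos (Nat.le_of_dvd (by omega) hab) ha).ne'⟩, rfl⟩
  · rintro ⟨d, ⟨hdb, hd⟩, rfl⟩
    have hd0 : 0 < d := Nat.pos_of_dvd_of_pos (dvd_trans (dvd_mul_left d a) hdb) (by omega)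
    have hle : a * d ≤ b := Nat.le_of_dvd (by omega) hdb
    exact ⟨⟨Nat.mul_pos ha hd0, by omega⟩, dvd_mul_right a d, hdb⟩

namespace ArithmeticFunction

variable {R : Type*}

def divisorMatrix [Zero R] (f : ArithmeticFunction R) (n : ℕ) : Matrix (Fin n) (Fin n) R :=
  Matrix.of fun i j => if i.val + 1 ∣ j.val + 1 then f ((j.val + 1) / (i.val + 1)) else 0

theorem divisorMatrix_apply [Zero R] (f : ArithmeticFunction R) {n : ℕ} (i j : Fin n) :
    divisorMatrix f n i j = if i.val + 1 ∣ j.val + 1 then f ((j.val + 1) / (i.val + 1)) else 0 :=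
  rfl

theorem divisorMatrix_mul [Semiring R] (f g : ArithmeticFunction R) (n : ℕ) :
    divisorMatrix f n * divisorMatrix g n = divisorMatrix (f * g) n := by
  ext i j
  set a := i.val + 1
  set b := j.val + 1
  have hsum : (divisorMatrix f n * divisorMatrix g n) i j =
      ∑ m ∈ Icc 1 n with a ∣ m ∧ m ∣ b, f (m / a) * g (b / m) := by
    rw [sum_filter, ← Fin.sum_univ_eq_sum_Icc_one, Matrix.mul_apply]
    refine sum_congr rfl fun k _ => ?_
    simp only [divisorMatrix_apply, ite_mul, mul_ite, zero_mul, mul_zero, ite_and]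
    split_ifs <;> rfl
  rw [hsum, divisorMatrix_apply]
  split_ifs with hab
  · rw [Nat.sum_Icc_filter_dvd_dvd hab (by omega) (by omega), mul_apply,
      Nat.sum_divisorsAntidiagonal (fun x y => f x * g y)]
    refine sum_congr rfl fun d _ => ?_
    rw [Nat.mul_div_cancel_left d (Nat.pos_of_ne_zero (by omega)), Nat.div_div_eq_div_mul]
  · refine sum_eq_zero fun m hm => absurd ?_ hab
    obtain ⟨ham, hmb⟩ := (mem_filter.mp hm).2
    exact ham.trans hmb

theorem divisorMatrix_one [Semiring R] (n : ℕ) :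
    divisorMatrix (1 : ArithmeticFunction R) n = 1 := by
  ext i j
  rw [divisorMatrix_apply, Matrix.one_apply, one_apply]
  by_cases hij : i = j
  · simp [hij]
  · have hne : i.val + 1 ≠ j.val + 1 := by simpa [Fin.ext_iff] using hij
    simp only [hij, if_false, ite_eq_right_iff]
    exact fun hdvd h1 => absurd (Nat.eq_of_dvd_of_div_eq_one hdvd h1) hne

theorem isUpperTriangular_divisorMatrix [Zero R] (f : ArithmeticFunction R) (n : ℕ) :
    (divisorMatrix f n).IsUpperTriangular := fun i j hji =>
  if_neg fun hdvd => (Nat.le_of_dvd j.val.succ_pos hdvd).not_gt (by simpa using hji)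

theorem det_divisorMatrix [CommRing R] (f : ArithmeticFunction R) (n : ℕ) :
    (divisorMatrix f n).det = f 1 ^ n := by
  rw [det_of_isUpperTriangular (isUpperTriangular_divisorMatrix f n)]
  simp [divisorMatrix_apply]

end ArithmeticFunction

theorem redheffer_eq_updateCol {n : ℕ} (hn : 0 < n) :
    redheffer n = (divisorMatrix (ζ : ArithmeticFunction ℤ) n).updateCol ⟨0, hn⟩ 1 := by
  ext i j
  rw [updateCol_apply, divisorMatrix_apply, redheffer]
  by_cases hj : j = ⟨0, hn⟩
  · simp [hj]
  · have hj1 : j.val + 1 ≠ 1 := by simpa [Fin.ext_iff] using hj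
    simp only [hj, hj1, false_or, if_false]
    split_ifs with hdvd
    · have hquot : (j.val + 1) / (i.val + 1) ≠ 0 :=
        (Nat.div_pos (Nat.le_of_dvd j.val.succ_pos hdvd) i.val.succ_pos).ne'
      rw [natCoe_apply, zeta_apply_ne hquot, Nat.cast_one]
    · rfl

theorem det_redheffer (n : ℕ) (hn : 1 ≤ n) :
    (redheffer n).det = ∑ k ∈ Finset.Icc 1 n, (ArithmeticFunction.moebius k : ℤ) := by
  have hinv : divisorMatrix μ n * divisorMatrix (ζ : ArithmeticFunction ℤ) n = 1 := by
    rw [divisorMatrix_mul, moebius_mul_coe_zeta, divisorMatrix_one]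
  calc (redheffer n).det = (divisorMatrix μ n * redheffer n).det := by
        rw [det_mul, det_divisorMatrix, moebius_apply_one, one_pow, one_mul]
    _ = (divisorMatrix μ n *ᵥ 1) ⟨0, hn⟩ := by
        rw [redheffer_eq_updateCol hn, mul_updateCol, hinv, det_one_updateCol]
    _ = ∑ k ∈ Icc 1 n, (μ k : ℤ) := by
        simp [mulVec, dotProduct, divisorMatrix_apply, Fin.sum_univ_eq_sum_Icc_one]
end
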